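/- Suppose h_1 : W → ℝ and g_1 ∈ ℝ satisfy the single-reel Bellman equation h_1(w) = -g_1 + Σ_x p(x)·(c(w,x) + h_1(e(w,x))), and let h_N(w_1,...,w_N) := Σ_n h_1(w_n). Then for any constant θ ∈ ℝ, the function ĥ_N(w_1,...,w_N,x) := (1/N)·Σ_{n=1}^N (c(w_n,x) + h_N(w_1,...,e(w_n,x),...,w_N)) + θ, together with gain g_1, satisfies the augmented N-reel Bellman equation under the random policy: ĥ_N(w_1,...,w_N,x) = -g_1 + (1/N)·Σ_{n=1}^N [ c(w_n,x) + Σ_{x'} p(x')·ĥ_N(w_1,...,e(w_n,x),...,w_N,x') ] for all states. -/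

import Mathlib

open Finset

/-- Updated reel weight. -/
def reelE (B w x : ℕ) : ℕ := if x ≤ w then w - x else B - x

/-- Filament waste (real-valued). -/
def reelC (w x : ℕ) : ℝ := if x ≤ w then 0 else w

/-!
Write `H(s) = Σₘ h(sₘ)` for the sum of single-reel biases. Changing only reel `n` changes `H` by
`h(e(sₙ,x)) - h(sₙ)`, so averaging the candidate bias against `p` and applying the single-reel
Bellman equation reel by reel gives `E_{x'} ĥ(s, x') = g + θ + H(s)` at every state where that
equation holds. Substituting this at the successor states, the gain and `θ` cancel the `-g` and
the averaged `g + θ`, leaving exactly the defining formula of `ĥ`.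
-/

theorem Fintype.sum_comp_update {ι α M : Type*} [Fintype ι] [DecidableEq ι] [AddCommGroup M]
    (f : α → M) (t : ι → α) (k : ι) (v : α) :
    ∑ m, f (Function.update t k v m) = ∑ m, f (t m) + (f v - f (t k)) := by
  rw [← Function.comp_def, Function.comp_update, sum_update_of_mem (mem_univ k),
    sum_eq_add_sum_sdiff_singleton_of_mem (mem_univ k) (fun m => f (t m))]
  simp only [Function.comp_apply]
  abel

lemma reelE_lt {B w x : ℕ} (hw : w < B) (hx : 1 ≤ x) : reelE B w x < B := by
  unfold reelE; split <;> omega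

section UniformRandomPolicy

variable {ι α κ : Type*} [Fintype ι] [DecidableEq ι]
  (X : Finset κ) (p : κ → ℝ) (e : α → κ → α) (c : α → κ → ℝ) (h : α → ℝ) (g θ : ℝ)

noncomputable def augmentedBias (s : ι → α) (x : κ) : ℝ :=
  1 / (Fintype.card ι : ℝ) *
    ∑ n, (c (s n) x + ∑ m, h (Function.update s n (e (s n) x) m)) + θ

def SatisfiesBellman (w : α) : Prop :=
  h w = -g + ∑ x ∈ X, p x * (c w x + h (e w x))

theorem augmentedBias_eq [Nonempty ι] (s : ι → α) (x : κ) :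
    augmentedBias e c h θ s x =
      1 / (Fintype.card ι : ℝ) * ∑ n, (c (s n) x + h (e (s n) x) - h (s n))
        + ∑ m, h (s m) + θ := by
  have hcard : (Fintype.card ι : ℝ) ≠ 0 := Nat.cast_ne_zero.mpr Fintype.card_ne_zero
  have hsplit : ∀ n, c (s n) x + ∑ m, h (Function.update s n (e (s n) x) m)
      = (c (s n) x + h (e (s n) x) - h (s n)) + ∑ m, h (s m) := fun n => by
    rw [Fintype.sum_comp_update]; ring
  simp only [augmentedBias, hsplit, sum_add_distrib, sum_const, card_univ, nsmul_eq_mul]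
  field_simp

theorem sum_mul_augmentedBias [Nonempty ι] (hp : ∑ x ∈ X, p x = 1) {s : ι → α}
    (hs : ∀ n, SatisfiesBellman X p e c h g (s n)) :
    ∑ x ∈ X, p x * augmentedBias e c h θ s x = g + θ + ∑ m, h (s m) := by
  set H := ∑ m, h (s m)
  have hcard : (Fintype.card ι : ℝ) ≠ 0 := Nat.cast_ne_zero.mpr Fintype.card_ne_zero
  have hgain : ∀ n, ∑ x ∈ X, p x * (c (s n) x + h (e (s n) x) - h (s n)) = g := fun n => by
    have := hs n
    rw [SatisfiesBellman] at this
    simp only [mul_sub, sum_sub_distrib, ← sum_mul, hp]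
    linarith
  calc ∑ x ∈ X, p x * augmentedBias e c h θ s x
      = ∑ x ∈ X, (1 / (Fintype.card ι : ℝ) *
          ∑ n, p x * (c (s n) x + h (e (s n) x) - h (s n)) + p x * (H + θ)) :=
        sum_congr rfl fun x _ => by rw [augmentedBias_eq, ← mul_sum]; ring
    _ = 1 / (Fintype.card ι : ℝ) *
          ∑ n, ∑ x ∈ X, p x * (c (s n) x + h (e (s n) x) - h (s n))
        + (∑ x ∈ X, p x) * (H + θ) := by
        rw [sum_add_distrib, ← mul_sum, ← sum_mul, sum_comm]
    _ = g + θ + H := by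
        simp only [hgain, hp, sum_const, card_univ, nsmul_eq_mul]
        field_simp
        ring

theorem augmentedBias_satisfiesBellman [Nonempty ι] (hp : ∑ x ∈ X, p x = 1) {S : Set α}
    (hS : ∀ w ∈ S, SatisfiesBellman X p e c h g w) {x : κ} (hSx : ∀ w ∈ S, e w x ∈ S)
    {s : ι → α} (hs : ∀ n, s n ∈ S) :
    augmentedBias e c h θ s x =
      -g + 1 / (Fintype.card ι : ℝ) * ∑ n, (c (s n) x +
        ∑ x' ∈ X, p x' * augmentedBias e c h θ (Function.update s n (e (s n) x)) x') := by
  have hcard : (Fintype.card ι : ℝ) ≠ 0 := Nat.cast_ne_zero.mpr Fintype.card_ne_zero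
  have hnext : ∀ n m, Function.update s n (e (s n) x) m ∈ S := fun n =>
    (Function.forall_update_iff s fun _ w => w ∈ S).2 ⟨hSx _ (hs n), fun m _ => hs m⟩
  have hexpect : ∀ n, ∑ x' ∈ X, p x' * augmentedBias e c h θ (Function.update s n (e (s n) x)) x'
      = g + θ + ∑ m, h (Function.update s n (e (s n) x) m) := fun n =>
    sum_mul_augmentedBias X p e c h g θ hp fun m => hS _ (hnext n m)
  simp only [hexpect, add_left_comm _ (g + θ), sum_add_distrib, sum_const, card_univ,
    nsmul_eq_mul]
  rw [augmentedBias, sum_add_distrib]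
  field_simp
  ring

end UniformRandomPolicy

theorem augmented_N_reel_bias_formula_general
    (B N : ℕ) (hN : 0 < N) (p : ℕ → ℝ)
    (hp1 : ∑ x ∈ Icc 1 B, p x = 1)
    (h1 : ℕ → ℝ) (g1 : ℝ)
    (hBellman : ∀ w < B,
      h1 w = -g1 + ∑ x ∈ Icc 1 B, p x * (reelC w x + h1 (reelE B w x)))
    (θ : ℝ) (hhat : (Fin N → ℕ) → ℕ → ℝ)
    (hhat_def : ∀ s x, hhat s x =
      (1 / (N : ℝ)) * (∑ n : Fin N, (reelC (s n) x +
        ∑ m : Fin N, h1 (Function.update s n (reelE B (s n) x) m))) + θ) :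
    ∀ s : Fin N → ℕ, (∀ n, s n < B) → ∀ x ∈ Icc 1 B,
      hhat s x =
        -g1 + (1 / (N : ℝ)) * ∑ n : Fin N,
          (reelC (s n) x + ∑ x' ∈ Icc 1 B, p x' *
            hhat (Function.update s n (reelE B (s n) x)) x') := by
  intro s hs x hx
  obtain rfl : hhat = augmentedBias (reelE B) reelC h1 θ :=
    funext₂ fun s x => by rw [hhat_def, augmentedBias, Fintype.card_fin]
  have : Nonempty (Fin N) := ⟨⟨0, hN⟩⟩
  have hx1 : 1 ≤ x := (mem_Icc.1 hx).1
  simpa only [Fintype.card_fin] using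
    augmentedBias_satisfiesBellman (Icc 1 B) p (reelE B) reelC h1 g1 θ hp1 (S := {w | w < B})
      hBellman (fun w hw => reelE_lt hw hx1) hs

/-- Theorem 2: if `(g₁, h₁)` solves the single-reel Bellman
equation and `h_N := Σ_n h₁(w_n)`, then for any constant `θ`, the function
`ĥ_N(w,x) := (1/N)·Σ_n (c(w_n,x) + h_N(w₁,...,e(w_n,x),...,w_N)) + θ`
together with gain `g₁` solves the augmented `N`-reel Bellman equation under
the random policy. -/
theorem augmented_N_reel_bias_formula
    (B N : ℕ) (hB : 0 < B) (hN : 0 < N) (p : ℕ → ℝ)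
    (hp0 : ∀ x ∈ Icc 1 B, 0 ≤ p x) (hp1 : ∑ x ∈ Icc 1 B, p x = 1)
    (h1 : ℕ → ℝ) (g1 : ℝ)
    (hBellman : ∀ w < B,
      h1 w = -g1 + ∑ x ∈ Icc 1 B, p x * (reelC w x + h1 (reelE B w x)))
    (θ : ℝ) (hhat : (Fin N → ℕ) → ℕ → ℝ)
    (hhat_def : ∀ s x, hhat s x =
      (1 / (N : ℝ)) * (∑ n : Fin N, (reelC (s n) x +
        ∑ m : Fin N, h1 (Function.update s n (reelE B (s n) x) m))) + θ) :
    ∀ s : Fin N → ℕ, (∀ n, s n < B) → ∀ x ∈ Icc 1 B,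
      hhat s x =
        -g1 + (1 / (N : ℝ)) * ∑ n : Fin N,
          (reelC (s n) x + ∑ x' ∈ Icc 1 B, p x' *
            hhat (Function.update s n (reelE B (s n) x)) x') :=
  augmented_N_reel_bias_formula_general B N hN p hp1 h1 g1 hBellman θ hhat hhat_def
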